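/- Construction of a [2^{h+1}, 2 + 1/h, 2^{h+1} - 2] additive MDS code over F_{2^h}: let w be a primitive element of F_{2^{h+1}} and {1, α, ..., α^{h-1}} an F_2-basis of F_{2^h}. For (x_1, x_2) ∈ F_{2^h} × F_{2^{h+1}}, define the vector whose coordinate indexed by a ∈ F_{2^{h+1}} is x_1 + Σ_{j=0}^{h-1} Tr(x_2 a w^j) α^j, where Tr : F_{2^{h+1}} → F_2 is the trace. The resulting code C has size 2^{2h+1}, length n = 2^{h+1}, and minimum distance n - 2, i.e., every nonzero codeword has at most 2 zero coordinates. -/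

import Mathlib

/-!
Since `1, w, …, w^h` is an `F₂`-basis of `L` and the trace form is nondegenerate, the map
`b ↦ (Tr(b w^j))_{j ≤ h}` is injective. If `x₂ ≠ 0` and two zeros `a₁, a₂` of the codeword of `x`
have the same value of `Tr(x₂ a w^h)`, linear independence of the `α^j` makes the other `h`
traces of `x₂ a₁` and `x₂ a₂` agree as well, so `a₁ = a₂`: a codeword has at most `|F₂| = 2`
zeros. The code map is additive, so it is injective, as a nonzero kernel element would vanish
at all `2^(h+1) > 2` points.
-/

open Function

section TraceForm

variable (K : Type*) {L : Type*} [Field K] [Field L] [Algebra K L]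

theorem Module.Basis.trace_mul_injective [FiniteDimensional K L] [Algebra.IsSeparable K L]
    {ι : Type*} (B : Module.Basis ι K L) :
    Function.Injective fun (b : L) (i : ι) => Algebra.trace K L (b * B i) := by
  intro u v huv
  have hform : Algebra.traceForm K L (u - v) = 0 := B.ext fun i => by
    simp [congrFun huv i]
  exact sub_eq_zero.mp <| (traceForm_nondegenerate K L).1 _ fun y => by simp [hform]

theorem Algebra.adjoin_singleton_eq_top_of_forall_eq_pow {w : L}
    (hw : ∀ z : L, z ≠ 0 → ∃ t : ℕ, z = w ^ t) : Algebra.adjoin K {w} = ⊤ := by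
  refine Algebra.eq_top_iff.mpr fun z => ?_
  obtain rfl | hz := eq_or_ne z 0
  · exact zero_mem _
  · obtain ⟨t, rfl⟩ := hw z hz
    exact pow_mem (Algebra.self_mem_adjoin_singleton K w) t

theorem trace_mul_pow_injective_of_forall_eq_pow [Finite K] [Finite L] {w : L}
    (hw : ∀ z : L, z ≠ 0 → ∃ t : ℕ, z = w ^ t) :
    Injective fun (b : L) (j : Fin (Module.finrank K L)) =>
      Algebra.trace K L (b * w ^ (j : ℕ)) := by
  have : FiniteDimensional K L := Module.Finite.of_finite
  let pb := PowerBasis.ofAdjoinEqTop (IsIntegral.of_finite K w)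
    (Algebra.adjoin_singleton_eq_top_of_forall_eq_pow K hw)
  have hpow : ∀ j, pb.basis.reindex (finCongr pb.finrank.symm) j = w ^ (j : ℕ) := fun j => by
    rw [Module.Basis.reindex_apply, PowerBasis.coe_basis, PowerBasis.ofAdjoinEqTop_gen]; rfl
  simpa only [hpow] using (pb.basis.reindex (finCongr pb.finrank.symm)).trace_mul_injective K

end TraceForm

section TraceCode

variable (K : Type*) {E L : Type*} [Field K] [Field L] [Algebra K L]
  [AddCommGroup E] [Module K E] {h : ℕ} (β : Fin h → E) (w : L)

noncomputable def traceCode : E × L →+ (L → E) :=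
  AddMonoidHom.mk'
    (fun x a => x.1 + ∑ j : Fin h, Algebra.trace K L (x.2 * a * w ^ (j : ℕ)) • β j)
    fun x y => by
      funext a
      simp only [Prod.fst_add, Prod.snd_add, add_mul, map_add, add_smul, Finset.sum_add_distrib,
        Pi.add_apply]
      abel

theorem traceCode_apply (x : E × L) (a : L) :
    traceCode K β w x a = x.1 + ∑ j : Fin h, Algebra.trace K L (x.2 * a * w ^ (j : ℕ)) • β j :=
  rfl

variable {K β w}

theorem card_filter_traceCode_eq_zero_le [Fintype K] [Fintype L] [DecidableEq E]
    (hβ : LinearIndependent K β)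
    (hw : Injective fun (b : L) (j : Fin (h + 1)) => Algebra.trace K L (b * w ^ (j : ℕ)))
    {x : E × L} (hx : x ≠ 0) :
    (Finset.univ.filter fun a : L => traceCode K β w x a = 0).card ≤ Fintype.card K := by
  obtain hx2 | hx2 := eq_or_ne x.2 0
  · have hx1 : x.1 ≠ 0 := fun hx1 => hx (Prod.ext hx1 hx2)
    simp [traceCode_apply, hx2, hx1]
  refine Finset.card_le_card_of_injOn (fun a => Algebra.trace K L (x.2 * a * w ^ h))
    (fun a _ => Finset.mem_univ _) fun a₁ ha₁ a₂ ha₂ hlast => ?_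
  rw [Finset.mem_coe, Finset.mem_filter_univ, traceCode_apply] at ha₁ ha₂
  have hsum := add_left_cancel (ha₁.trans ha₂.symm)
  have htrace : (fun j : Fin (h + 1) => Algebra.trace K L (x.2 * a₁ * w ^ (j : ℕ))) =
      fun j : Fin (h + 1) => Algebra.trace K L (x.2 * a₂ * w ^ (j : ℕ)) :=
    funext <| Fin.lastCases (by simpa using hlast) fun j => by
      simpa using hβ.eq_coords_of_eq hsum j
  exact mul_left_cancel₀ hx2 (hw htrace)

theorem traceCode_injective [Fintype K] [Fintype L] (hβ : LinearIndependent K β)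
    (hw : Injective fun (b : L) (j : Fin (h + 1)) => Algebra.trace K L (b * w ^ (j : ℕ)))
    (hKL : Fintype.card K < Fintype.card L) :
    Injective (traceCode K β w) := by
  classical
  refine (injective_iff_map_eq_zero _).mpr fun x hx => by_contra fun hx0 => ?_
  have := card_filter_traceCode_eq_zero_le hβ hw hx0
  simp [hx] at this
  omega

end TraceCode

/-- Construction of a `[2^{h+1}, 2 + 1/h, 2^{h+1} - 2]` additive MDS code over `F_{2^h}`:
with `F = F_2`, `E = F_{2^h}`, `L = F_{2^{h+1}}`, a primitive element `w` of `L` and an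
`F`-basis `1, α, …, α^{h-1}` of `E`, the map sending `(x₁, x₂)` to the vector with coordinate
`x₁ + ∑_j Tr(x₂ a w^j) α^j` at `a ∈ L` gives an additive code of size `2^{2h+1}` in which
every nonzero codeword has at most 2 zero coordinates (minimum distance `n - 2`). -/
theorem additive_MDS_construction_q2_k3
    (h : ℕ) (F E L : Type)
    [Field F] [Fintype F] [Field E] [Fintype E] [DecidableEq E]
    [Field L] [Fintype L] [DecidableEq L] [Algebra F E] [Algebra F L]
    (hh : 1 ≤ h)
    (hF : Fintype.card F = 2) (hE : Fintype.card E = 2 ^ h)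
    (hL : Fintype.card L = 2 ^ (h + 1))
    (α : E) (hα : LinearIndependent F (fun j : Fin h => α ^ (j : ℕ)))
    (w : L) (hw : ∀ z : L, z ≠ 0 → ∃ t : ℕ, z = w ^ t)
    (c : E × L → L → E)
    (hc : ∀ x a, c x a =
      x.1 + ∑ j : Fin h, Algebra.trace F L (x.2 * a * w ^ (j : ℕ)) • α ^ (j : ℕ)) :
    (∀ x y : E × L, c (x + y) = c x + c y) ∧
    Function.Injective c ∧
    Nat.card (Set.range c) = 2 ^ (2 * h + 1) ∧
    (∀ x : E × L, x ≠ 0 →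
      (Finset.univ.filter (fun a : L => c x a = 0)).card ≤ 2) := by
  have hrank : Module.finrank F L = h + 1 := by
    have hcard := Module.card_eq_pow_finrank (K := F) (V := L)
    rw [hL, hF] at hcard
    exact Nat.pow_right_injective le_rfl hcard.symm
  have htrace := trace_mul_pow_injective_of_forall_eq_pow F hw
  rw [hrank] at htrace
  have hFL : Fintype.card F < Fintype.card L := by
    rw [hF, hL]
    simpa using Nat.pow_lt_pow_right (a := 2) one_lt_two (show 1 < h + 1 by omega)
  obtain rfl : c = traceCode F (fun j : Fin h => α ^ (j : ℕ)) w := funext fun x => funext (hc x)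
  have hinj := traceCode_injective hα htrace hFL
  refine ⟨map_add _, hinj, ?_, fun x hx => hF ▸ card_filter_traceCode_eq_zero_le hα htrace hx⟩
  rw [Nat.card_range_of_injective hinj, Nat.card_prod, Nat.card_eq_fintype_card,
    Nat.card_eq_fintype_card, hE, hL, ← pow_add]
  ring_nf
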